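/- arXiv:1503.08626 — 3 statements merged into one kernel-verified Lean document; each statement's English description precedes it below -/
import Mathlib

section
/- Let d ≥ 1 and let c > 0 be a Pach constant for dimension d. Let H = (V_0, …, V_d, E) be a (d+1)-partite hypergraph and let ε > 0. If Disc(H) ≤ c^{d+1} − ε, then H has the ε-geometric overlap property. -/
open scoped Classical

/-- `c > 0` is a Pach constant for dimension `d` if for all pairwise disjoint finite point
sets `P 0, …, P d ⊂ ℝ^d` there exist `p ∈ ℝ^d` and subsets `Q i ⊆ P i` with
`|Q i| ≥ c·|P i|`, such that every simplex with one vertex in each `Q i` contains `p`. -/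
def IsPachConstant (d : ℕ) (c : ℝ) : Prop :=
  ∀ P : Fin (d + 1) → Finset (EuclideanSpace ℝ (Fin d)),
    (∀ i j, i ≠ j → Disjoint (P i) (P j)) →
    ∃ (p : EuclideanSpace ℝ (Fin d)) (Q : Fin (d + 1) → Finset (EuclideanSpace ℝ (Fin d))),
      (∀ i, Q i ⊆ P i) ∧
      (∀ i, c * ((P i).card : ℝ) ≤ ((Q i).card : ℝ)) ∧
      ∀ x : Fin (d + 1) → EuclideanSpace ℝ (Fin d),
        (∀ i, x i ∈ Q i) → p ∈ convexHull ℝ (Set.range x)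

/-!
Push the vertex classes forward along `f`; a Pach configuration `p, Q 0, …, Q d` for the image
classes pulls back to vertex sets `W i ⊆ V i` of relative density at least `c`. The product of
these densities is at least `c^(d+1)`, so the low discrepancy forces at least an `ε`-fraction of
the edges to lie in `W 0 × ⋯ × W d`, and every such edge is mapped to a simplex containing `p`.
-/

open Finset

namespace Finset

variable {α β : Type*} [DecidableEq β]

theorem disjoint_image_of_injOn {s t : Finset α} {u : Set α} {f : α → β} (h : Disjoint s t)
    (hf : Set.InjOn f u) (hs : ↑s ⊆ u) (ht : ↑t ⊆ u) : Disjoint (s.image f) (t.image f) := by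
  rw [← disjoint_coe, coe_image, coe_image]
  exact (disjoint_coe.2 h).image hf hs ht

theorem card_filter_mem_of_subset_image {s : Finset α} {t : Finset β} {f : α → β}
    (hf : Set.InjOn f s) (ht : t ⊆ s.image f) : #(s.filter (f · ∈ t)) = #t := by
  refine card_nbij f (fun a ha => (mem_filter.1 ha).2)
    (hf.mono fun a ha => (mem_filter.1 ha).1) fun b hb => ?_
  obtain ⟨a, ha, rfl⟩ := mem_image.1 (ht hb)
  exact ⟨a, mem_filter.2 ⟨ha, hb⟩, rfl⟩

end Finset

theorem mul_le_of_abs_div_sub_le {x n P δ ε : ℝ} (hn : 0 < n) (h : |x / n - P| ≤ δ)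
    (hP : δ + ε ≤ P) : ε * n ≤ x := by
  rw [← le_div_iff₀ hn]
  linarith [(abs_le.1 h).1]

theorem pow_card_le_prod_density {ι α : Type*} [Fintype ι] {c : ℝ} (hc : 0 < c)
    {V W : ι → Finset α} (hVne : ∀ i, (V i).Nonempty) (hW : ∀ i, c * #(V i) ≤ #(W i)) :
    c ^ Fintype.card ι ≤ ∏ i, (#(W i) : ℝ) / #(V i) := by
  rw [← Finset.card_univ, ← prod_const]
  refine prod_le_prod (fun _ _ => hc.le) fun i _ => ?_
  rw [le_div_iff₀ (by exact_mod_cast (hVne i).card_pos)]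
  exact hW i

theorem overlap_of_discrepancy_general {α : Type*} [DecidableEq α] (d : ℕ)
    (c : ℝ) (hc : 0 < c) (hPach : IsPachConstant d c)
    (V : Fin (d + 1) → Finset α) (E : Finset (Fin (d + 1) → α))
    (hVne : ∀ i, (V i).Nonempty)
    (hVdisj : ∀ i j, i ≠ j → Disjoint (V i) (V j))
    (hEne : E.Nonempty)
    (ε : ℝ)
    (hdisc : ∀ W : Fin (d + 1) → Finset α, (∀ i, W i ⊆ V i) →
      |((E.filter fun e => ∀ i, e i ∈ W i).card : ℝ) / (E.card : ℝ) -
        ∏ i, ((W i).card : ℝ) / ((V i).card : ℝ)| ≤ c ^ (d + 1) - ε) :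
    ∀ f : α → EuclideanSpace ℝ (Fin d), Set.InjOn f (⋃ i, (V i : Set α)) →
      ∃ p : EuclideanSpace ℝ (Fin d),
        ε * (E.card : ℝ) ≤
          ((E.filter fun e => p ∈ convexHull ℝ (Set.range fun i => f (e i))).card : ℝ) := by
  intro f hf
  have hsub (i) : (V i : Set α) ⊆ ⋃ j, (V j : Set α) :=
    Set.subset_iUnion (fun j => (V j : Set α)) i
  obtain ⟨p, Q, hQP, hQcard, hQhull⟩ := hPach (fun i => (V i).image f) fun i j hij =>
    disjoint_image_of_injOn (hVdisj i j hij) hf (hsub i) (hsub j)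
  let W : Fin (d + 1) → Finset α := fun i => (V i).filter (f · ∈ Q i)
  have hWcard (i) : #(W i) = #(Q i) := card_filter_mem_of_subset_image (hf.mono (hsub i)) (hQP i)
  have hWdense (i) : c * #(V i) ≤ #(W i) := by
    rw [hWcard, ← card_image_of_injOn (hf.mono (hsub i))]
    exact hQcard i
  have hprod : c ^ (d + 1) - ε + ε ≤ ∏ i, (#(W i) : ℝ) / #(V i) := by
    simpa using pow_card_le_prod_density hc hVne hWdense
  refine ⟨p, (mul_le_of_abs_div_sub_le (by exact_mod_cast hEne.card_pos)
    (hdisc W fun i => filter_subset _ _) hprod).trans ?_⟩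
  have hedges : E.filter (fun e => ∀ i, e i ∈ W i) ⊆
      E.filter (fun e => p ∈ convexHull ℝ (Set.range fun i => f (e i))) :=
    monotone_filter_right E fun e _ he => hQhull _ fun i => (mem_filter.1 (he i)).2
  exact_mod_cast card_le_card hedges

/-- **Overlap criterion via discrepancy.** Let `d ≥ 1` and let `c > 0` be a Pach constant for
dimension `d`. Let `H = (V 0, …, V d, E)` be a `(d+1)`-partite hypergraph (the `V i` are finite,
nonempty and pairwise disjoint, `E` is a nonempty set of edges, each edge having its `i`-th
vertex in `V i`) and let `ε > 0`. If `Disc(H) ≤ c^(d+1) − ε` (i.e. for every choice of subsets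
`W i ⊆ V i` the discrepancy expression is at most `c^(d+1) − ε`), then `H` has the `ε`-geometric
overlap property: for every map `f` of the vertices into `ℝ^d`, injective on the vertex set,
there is a point `p ∈ ℝ^d` contained in the convex hulls of the images of at least `ε·|E|`
of the edges. -/
theorem overlap_of_discrepancy {α : Type*} [DecidableEq α] (d : ℕ) (hd : 1 ≤ d)
    (c : ℝ) (hc : 0 < c) (hPach : IsPachConstant d c)
    (V : Fin (d + 1) → Finset α) (E : Finset (Fin (d + 1) → α))
    (hVne : ∀ i, (V i).Nonempty)
    (hVdisj : ∀ i j, i ≠ j → Disjoint (V i) (V j))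
    (hEne : E.Nonempty)
    (hEV : ∀ e ∈ E, ∀ i, e i ∈ V i)
    (ε : ℝ) (hε : 0 < ε)
    (hdisc : ∀ W : Fin (d + 1) → Finset α, (∀ i, W i ⊆ V i) →
      |((E.filter fun e => ∀ i, e i ∈ W i).card : ℝ) / (E.card : ℝ) -
        ∏ i, ((W i).card : ℝ) / ((V i).card : ℝ)| ≤ c ^ (d + 1) - ε) :
    ∀ f : α → EuclideanSpace ℝ (Fin d), Set.InjOn f (⋃ i, (V i : Set α)) →
      ∃ p : EuclideanSpace ℝ (Fin d),
        ε * (E.card : ℝ) ≤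
          ((E.filter fun e => p ∈ convexHull ℝ (Set.range fun i => f (e i))).card : ℝ) :=
  overlap_of_discrepancy_general d c hc hPach V E hVne hVdisj hEne ε hdisc
end

section
/- (Hypergraph mixing lemma.) Let d ≥ 1 and let H = (V_0, …, V_d, E) be a type-regular (d+1)-partite hypergraph in which every vertex belongs to at least one edge. For each i = 0, …, d let B_i be the i-induced bipartite graph of vertices versus walls (which is biregular by type-regularity), and let λ̃(B_i) be its normalized second largest eigenvalue. Then Disc(H) ≤ d · max_{i=0,…,d} λ̃(B_i). -/
open scoped Classical

noncomputable section

/-- Restriction of an edge `e : Fin N → α` to the coordinates in `I`, i.e. the `I`-face of `e`. -/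
def resF {α : Type*} {N : ℕ} (I : Finset (Fin N)) (e : Fin N → α) : {j : Fin N // j ∈ I} → α :=
  fun j => e j.1

/-- The set of `I`-faces of the hypergraph with edge set `E`. -/
def faces {α : Type*} [DecidableEq α] {N : ℕ} (E : Finset (Fin N → α)) (I : Finset (Fin N)) :
    Finset ({j : Fin N // j ∈ I} → α) :=
  E.image (resF I)

/-- The cotype of `i` : all coordinates except `i`. -/
def cotype {N : ℕ} (i : Fin N) : Finset (Fin N) := Finset.univ.erase i

/-- Insert the vertex `v` in the `i`-th coordinate of the wall `w` (a face of cotype `i`),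
producing a candidate edge. -/
def combineF {α : Type*} {N : ℕ} (i : Fin N) (v : α)
    (w : {j : Fin N // j ∈ cotype i} → α) : Fin N → α :=
  fun j => if h : j ∈ cotype i then w ⟨j, h⟩ else v

/-- The normalized second largest eigenvalue `λ̃(B_i)` of the `i`-induced bipartite graph of
vertices (`V i`) versus `i`-cotype walls, for a biregular bipartite graph with degrees
`D i` (on the vertex side) and `δ i` (on the wall side): the supremum of
`|∑_{(v,w) adjacent} f(v)·g(w)| / (√(D·δ)·‖f‖₂·‖g‖₂)` over nonzero mean-zero
functions `f` on `V i` and `g` on the walls. -/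
def lamTildeB {α : Type*} [DecidableEq α] {d : ℕ}
    (V : Fin (d + 1) → Finset α) (E : Finset (Fin (d + 1) → α))
    (D δ : Fin (d + 1) → ℕ) (i : Fin (d + 1)) : ℝ :=
  sSup {r : ℝ |
    ∃ (f : α → ℝ) (g : ({j : Fin (d + 1) // j ∈ cotype i} → α) → ℝ),
      (∃ v ∈ V i, f v ≠ 0) ∧ (∃ w ∈ faces E (cotype i), g w ≠ 0) ∧
      (∑ v ∈ V i, f v) = 0 ∧ (∑ w ∈ faces E (cotype i), g w) = 0 ∧
      r = |∑ v ∈ V i, ∑ w ∈ faces E (cotype i),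
              (if combineF i v w ∈ E then f v * g w else 0)| /
          (Real.sqrt ((D i : ℝ) * (δ i : ℝ)) *
            Real.sqrt (∑ v ∈ V i, (f v) ^ 2) *
            Real.sqrt (∑ w ∈ faces E (cotype i), (g w) ^ 2))}

/-!
Add the constraints `e j ∈ W j` one coordinate at a time. When coordinate `i` is added to a set
`S` of already constrained coordinates, the `S`-constraints only see the `i`-cotype wall of an
edge, so they single out a set `Q` of walls of `B_i`. Applying the definition of `λ̃(B_i)` to the
centred indicators of `W i` and of `Q` (the expander mixing lemma for `B_i`) shows that the count
`X` becomes `X'` with `|X' - (|W i| / |V i|) X| ≤ λ̃(B_i) |E|`. The first coordinate costs nothing,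
since `B_i` is `D i`-regular on the vertex side, and the other `d` steps add up to
`d · max_i λ̃(B_i) |E|`.
-/
open Finset

section Faces

variable {α : Type*} {N : ℕ}

lemma combineF_resF (i : Fin N) (e : Fin N → α) :
    combineF i (e i) (resF (cotype i) e) = e := by
  funext j
  by_cases h : j = i
  · subst h
    simp [combineF, cotype]
  · simp [combineF, resF, cotype, h]

lemma resF_combineF (i : Fin N) (v : α) (w : {j : Fin N // j ∈ cotype i} → α) :
    resF (cotype i) (combineF i v w) = w := by
  funext j
  simp [resF, combineF, j.2]

lemma combineF_self (i : Fin N) (v : α) (w : {j : Fin N // j ∈ cotype i} → α) :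
    combineF i v w i = v := by
  simp [combineF, cotype]

variable [DecidableEq α] {E : Finset (Fin N → α)} {i : Fin N} {Vi : Finset α}

lemma sum_edges_eq_sum_adjacent (hEV : ∀ e ∈ E, e i ∈ Vi)
    (F : α → ({j : Fin N // j ∈ cotype i} → α) → ℝ) :
    ∑ e ∈ E, F (e i) (resF (cotype i) e) =
      ∑ v ∈ Vi, ∑ w ∈ faces E (cotype i), if combineF i v w ∈ E then F v w else 0 := by
  rw [← sum_product', ← sum_filter (fun p : α × ({j : Fin N // j ∈ cotype i} → α) =>
    combineF i p.1 p.2 ∈ E) (fun p => F p.1 p.2)]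
  refine sum_nbij' (fun e => (e i, resF (cotype i) e)) (fun p => combineF i p.1 p.2)
    ?_ ?_ (fun e _ => combineF_resF i e) ?_ (fun _ _ => rfl)
  · intro e he
    simpa [combineF_resF, he, hEV e he, faces] using mem_image_of_mem (resF (cotype i)) he
  · intro p hp
    exact (mem_filter.mp hp).2
  · intro p _
    exact Prod.ext (combineF_self i p.1 p.2) (resF_combineF i p.1 p.2)

lemma sum_edges_vertex_eq {D : ℕ} (hEV : ∀ e ∈ E, e i ∈ Vi)
    (hdegV : ∀ v ∈ Vi, #{w ∈ faces E (cotype i) | combineF i v w ∈ E} = D) (φ : α → ℝ) :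
    ∑ e ∈ E, φ (e i) = D * ∑ v ∈ Vi, φ v := by
  rw [sum_edges_eq_sum_adjacent hEV (fun v _ => φ v), mul_sum]
  refine sum_congr rfl fun v hv => ?_
  rw [← sum_filter, sum_const, hdegV v hv, nsmul_eq_mul]

lemma sum_edges_wall_eq {δ : ℕ} (hEV : ∀ e ∈ E, e i ∈ Vi)
    (hdegW : ∀ w ∈ faces E (cotype i), #{v ∈ Vi | combineF i v w ∈ E} = δ)
    (ψ : ({j : Fin N // j ∈ cotype i} → α) → ℝ) :
    ∑ e ∈ E, ψ (resF (cotype i) e) = δ * ∑ w ∈ faces E (cotype i), ψ w := by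
  rw [sum_edges_eq_sum_adjacent hEV (fun _ w => ψ w), sum_comm, mul_sum]
  refine sum_congr rfl fun w hw => ?_
  rw [← sum_filter, sum_const, hdegW w hw, nsmul_eq_mul]

end Faces

lemma card_mul_div_card_of_subset {β : Type*} {s t : Finset β} (h : t ⊆ s) :
    (#s : ℝ) * (#t / #s) = #t := by
  obtain rfl | hs := s.eq_empty_or_nonempty
  · simp [subset_empty.mp h]
  · exact mul_div_cancel₀ _ (by exact_mod_cast hs.card_pos.ne')

lemma sum_indicator_sub_density {β : Type*} (s : Finset β) (P : β → Prop) [DecidablePred P] :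
    ∑ x ∈ s, ((if P x then 1 else 0) - (#{x ∈ s | P x} : ℝ) / #s) = 0 := by
  rw [sum_sub_distrib, sum_boole, sum_const, nsmul_eq_mul,
    card_mul_div_card_of_subset (filter_subset _ _), sub_self]

lemma sum_sq_indicator_sub_le_card {β : Type*} (s : Finset β) (P : β → Prop) [DecidablePred P]
    {p : ℝ} (hp₀ : 0 ≤ p) (hp₁ : p ≤ 1) :
    ∑ x ∈ s, ((if P x then 1 else 0) - p) ^ 2 ≤ (#s : ℝ) := by
  calc ∑ x ∈ s, ((if P x then 1 else 0) - p) ^ 2 ≤ ∑ _x ∈ s, (1 : ℝ) :=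
        sum_le_sum fun x _ => by split_ifs <;> nlinarith
    _ = #s := by simp

section Mixing

variable {α : Type*} [DecidableEq α] {d : ℕ} {V : Fin (d + 1) → Finset α}
  {E : Finset (Fin (d + 1) → α)} {D δ : Fin (d + 1) → ℕ} {i : Fin (d + 1)}

lemma lamTildeB_nonneg : 0 ≤ lamTildeB V E D δ i :=
  Real.sSup_nonneg fun _ ⟨_, _, _, _, _, _, hr⟩ => hr ▸ by positivity

variable (hEV : ∀ e ∈ E, e i ∈ V i)
  (hdegV : ∀ v ∈ V i, #{w ∈ faces E (cotype i) | combineF i v w ∈ E} = D i)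
  (hdegW : ∀ w ∈ faces E (cotype i), #{v ∈ V i | combineF i v w ∈ E} = δ i)
include hEV hdegV hdegW

lemma abs_sum_edges_mul_le (f : α → ℝ) (g : ({j // j ∈ cotype i} → α) → ℝ) :
    |∑ e ∈ E, f (e i) * g (resF (cotype i) e)| ≤
      √(D i * δ i) * √(∑ v ∈ V i, f v ^ 2) * √(∑ w ∈ faces E (cotype i), g w ^ 2) := by
  have hCS := sum_mul_sq_le_sq_mul_sq E (fun e => f (e i)) (fun e => g (resF (cotype i) e))
  rw [sum_edges_vertex_eq hEV hdegV (f · ^ 2), sum_edges_wall_eq hEV hdegW (g · ^ 2)] at hCS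
  calc _ ≤ √((D i * ∑ v ∈ V i, f v ^ 2) * (δ i * ∑ w ∈ faces E (cotype i), g w ^ 2)) :=
        Real.abs_le_sqrt hCS
    _ = √(D i * δ i * (∑ v ∈ V i, f v ^ 2) * ∑ w ∈ faces E (cotype i), g w ^ 2) := by
      ring_nf
    _ = _ := by rw [Real.sqrt_mul (by positivity), Real.sqrt_mul (by positivity)]

lemma abs_sum_edges_mul_le_lamTildeB {f : α → ℝ} {g : ({j // j ∈ cotype i} → α) → ℝ}
    (hf : ∑ v ∈ V i, f v = 0) (hg : ∑ w ∈ faces E (cotype i), g w = 0) :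
    |∑ e ∈ E, f (e i) * g (resF (cotype i) e)| ≤ lamTildeB V E D δ i *
      (√(D i * δ i) * √(∑ v ∈ V i, f v ^ 2) * √(∑ w ∈ faces E (cotype i), g w ^ 2)) := by
  set den := √(D i * δ i) * √(∑ v ∈ V i, f v ^ 2) * √(∑ w ∈ faces E (cotype i), g w ^ 2)
  have hCS : |∑ e ∈ E, f (e i) * g (resF (cotype i) e)| ≤ den :=
    abs_sum_edges_mul_le hEV hdegV hdegW f g
  obtain hden | hden := (show 0 ≤ den by positivity).eq_or_lt
  · rw [← hden] at hCS ⊢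
    simpa using hCS
  have hf₀ : ∃ v ∈ V i, f v ≠ 0 := by
    by_contra! h
    have h₀ : ∑ v ∈ V i, f v ^ 2 = 0 := sum_eq_zero fun v hv => by simp [h v hv]
    simp [den, h₀] at hden
  have hg₀ : ∃ w ∈ faces E (cotype i), g w ≠ 0 := by
    by_contra! h
    have h₀ : ∑ w ∈ faces E (cotype i), g w ^ 2 = 0 := sum_eq_zero fun w hw => by simp [h w hw]
    simp [den, h₀] at hden
  rw [← div_le_iff₀ hden]
  refine le_csSup ⟨1, ?_⟩ ⟨f, g, hf₀, hg₀, hf, hg,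
    by rw [sum_edges_eq_sum_adjacent hEV (fun v w => f v * g w)]⟩
  rintro _ ⟨f', g', -, -, -, -, rfl⟩
  rw [← sum_edges_eq_sum_adjacent hEV (fun v w => f' v * g' w)]
  exact div_le_one_of_le₀ (abs_sum_edges_mul_le hEV hdegV hdegW f' g') (by positivity)

lemma abs_card_filter_sub_density_mul_le {Wi : Finset α} (hWi : Wi ⊆ V i)
    (Q : ({j // j ∈ cotype i} → α) → Prop) :
    |(#{e ∈ E | e i ∈ Wi ∧ Q (resF (cotype i) e)} : ℝ) -
        #Wi / #(V i) * #{e ∈ E | Q (resF (cotype i) e)}| ≤ lamTildeB V E D δ i * #E := by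
  set p : ℝ := #Wi / #(V i)
  set m : ℝ := #{w ∈ faces E (cotype i) | Q w} / #(faces E (cotype i))
  set f : α → ℝ := fun v => (if v ∈ Wi then 1 else 0) - p
  set g : ({j // j ∈ cotype i} → α) → ℝ := fun w => (if Q w then 1 else 0) - m
  have hp : p = #{v ∈ V i | v ∈ Wi} / #(V i) := by
    rw [filter_mem_eq_inter, inter_eq_right.mpr hWi]
  have hf : ∑ v ∈ V i, f v = 0 := by
    simpa only [f, hp] using sum_indicator_sub_density (V i) (· ∈ Wi)
  have hg : ∑ w ∈ faces E (cotype i), g w = 0 := sum_indicator_sub_density _ Q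
  -- `f` has mean zero, so the constant part of `g` does not contribute
  have hB : ∑ e ∈ E, f (e i) * g (resF (cotype i) e) =
      #{e ∈ E | e i ∈ Wi ∧ Q (resF (cotype i) e)} - p * #{e ∈ E | Q (resF (cotype i) e)} := by
    calc ∑ e ∈ E, f (e i) * g (resF (cotype i) e)
        = ∑ e ∈ E, f (e i) * (if Q (resF (cotype i) e) then 1 else 0) - m * ∑ e ∈ E, f (e i) := by
          rw [mul_comm m, sum_mul]
          simp only [g, mul_sub, sum_sub_distrib]
      _ = ∑ e ∈ E, f (e i) * (if Q (resF (cotype i) e) then 1 else 0) := by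
          rw [sum_edges_vertex_eq hEV hdegV f, hf, mul_zero, mul_zero, sub_zero]
      _ = _ := by
          simp only [f, sub_mul, sum_sub_distrib, ← mul_sum, ← ite_and, ite_mul, one_mul,
            zero_mul, sum_boole]
  have hp₀ : 0 ≤ p := by positivity
  have hp₁ : p ≤ 1 := div_le_one_of_le₀ (by exact_mod_cast card_le_card hWi) (by positivity)
  have hm₀ : 0 ≤ m := by positivity
  have hm₁ : m ≤ 1 :=
    div_le_one_of_le₀ (by exact_mod_cast card_le_card (filter_subset _ _)) (by positivity)
  have hcardV : (#E : ℝ) = #(V i) * D i := by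
    simpa [mul_comm] using sum_edges_vertex_eq hEV hdegV (fun _ => (1 : ℝ))
  have hcardW : (#E : ℝ) = #(faces E (cotype i)) * δ i := by
    simpa [mul_comm] using sum_edges_wall_eq hEV hdegW (fun _ => (1 : ℝ))
  have hden : √(D i * δ i) * √(∑ v ∈ V i, f v ^ 2) * √(∑ w ∈ faces E (cotype i), g w ^ 2) ≤ #E :=
    calc _ ≤ √(D i * δ i) * √(#(V i) : ℝ) * √(#(faces E (cotype i)) : ℝ) := by
          gcongr
          · exact sum_sq_indicator_sub_le_card _ _ hp₀ hp₁
          · exact sum_sq_indicator_sub_le_card _ _ hm₀ hm₁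
      _ = √(#(V i) * D i * (#(faces E (cotype i)) * δ i)) := by
          rw [← Real.sqrt_mul (by positivity), ← Real.sqrt_mul (by positivity)]
          ring_nf
      _ = #E := by rw [← hcardV, ← hcardW, Real.sqrt_mul_self (by positivity)]
  rw [← hB]
  exact (abs_sum_edges_mul_le_lamTildeB hEV hdegV hdegW hf hg).trans
    (mul_le_mul_of_nonneg_left hden lamTildeB_nonneg)

end Mixing

lemma abs_card_filter_forall_sub_le {α : Type*} [DecidableEq α] {d : ℕ}
    {V : Fin (d + 1) → Finset α} {E : Finset (Fin (d + 1) → α)} {D δ : Fin (d + 1) → ℕ}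
    (hEV : ∀ e ∈ E, ∀ i, e i ∈ V i)
    (hdegV : ∀ i, ∀ v ∈ V i, #{w ∈ faces E (cotype i) | combineF i v w ∈ E} = D i)
    (hdegW : ∀ i, ∀ w ∈ faces E (cotype i), #{v ∈ V i | combineF i v w ∈ E} = δ i)
    {W : Fin (d + 1) → Finset α} (hW : ∀ i, W i ⊆ V i)
    {M : ℝ} (hM : ∀ i, lamTildeB V E D δ i ≤ M) {S : Finset (Fin (d + 1))} (hS : S.Nonempty) :
    |(#{e ∈ E | ∀ j ∈ S, e j ∈ W j} : ℝ) - #E * ∏ j ∈ S, (#(W j) / #(V j) : ℝ)| ≤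
      (#S - 1) * M * #E := by
  induction hS using Nonempty.cons_induction with
  | singleton i =>
    have hWcount : (#{e ∈ E | e i ∈ W i} : ℝ) = D i * #(W i) := by
      simpa [sum_boole, filter_mem_eq_inter, inter_eq_right.mpr (hW i)] using
        sum_edges_vertex_eq (hEV · · i) (hdegV i) (fun v => if v ∈ W i then (1 : ℝ) else 0)
    have hE : (#E : ℝ) = D i * #(V i) := by
      simpa using sum_edges_vertex_eq (hEV · · i) (hdegV i) (fun _ => (1 : ℝ))
    simp [hWcount, hE, mul_assoc, card_mul_div_card_of_subset (hW i)]
  | cons i S hiS hS ih =>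
    set p : ℝ := #(W i) / #(V i)
    set X : ℝ := (#{e ∈ E | ∀ j ∈ S, e j ∈ W j} : ℝ)
    set X' : ℝ := (#{e ∈ E | ∀ j ∈ cons i S hiS, e j ∈ W j} : ℝ)
    set P : ℝ := ∏ j ∈ S, (#(W j) / #(V j) : ℝ)
    let Q : ({j // j ∈ cotype i} → α) → Prop := fun w =>
      ∀ j (hj : j ∈ cotype i), j ∈ S → w ⟨j, hj⟩ ∈ W j
    have hQ (e : Fin (d + 1) → α) : Q (resF (cotype i) e) ↔ ∀ j ∈ S, e j ∈ W j :=
      ⟨fun h j hj => h j (by simpa [cotype] using ne_of_mem_of_not_mem hj hiS) hj,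
        fun h j _ hj => h j hj⟩
    have hstep : |X' - p * X| ≤ lamTildeB V E D δ i * #E := by
      simpa only [X', X, p, hQ, mem_cons, forall_eq_or_imp] using
        abs_card_filter_sub_density_mul_le (hEV · · i) (hdegV i) (hdegW i) (hW i) Q
    have hp₀ : 0 ≤ p := by positivity
    have hp₁ : p ≤ 1 := div_le_one_of_le₀ (by exact_mod_cast card_le_card (hW i)) (by positivity)
    have hlam : lamTildeB V E D δ i * #E ≤ M * #E := by gcongr; exact hM i
    calc |X' - #E * ∏ j ∈ cons i S hiS, (#(W j) / #(V j) : ℝ)|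
        = |(X' - p * X) + p * (X - #E * P)| := by rw [prod_cons]; congr 1; ring
      _ ≤ |X' - p * X| + |p * (X - #E * P)| := abs_add_le _ _
      _ = |X' - p * X| + p * |X - #E * P| := by rw [abs_mul, abs_of_nonneg hp₀]
      _ ≤ M * #E + 1 * ((#S - 1) * M * #E) := by
          gcongr
          exact hstep.trans hlam
      _ = (#(cons i S hiS) - 1) * M * #E := by rw [card_cons]; push_cast; ring

theorem hypergraph_mixing_lemma_general {α : Type*} [DecidableEq α] (d : ℕ)
    (V : Fin (d + 1) → Finset α) (E : Finset (Fin (d + 1) → α))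
    (hEne : E.Nonempty)
    (hEV : ∀ e ∈ E, ∀ i, e i ∈ V i)
    -- the bidegrees of the `i`-induced bipartite graphs (deduced from type-regularity)
    (D δ : Fin (d + 1) → ℕ)
    (hdegV : ∀ i, ∀ v ∈ V i,
      ((faces E (cotype i)).filter (fun w => combineF i v w ∈ E)).card = D i)
    (hdegW : ∀ i, ∀ w ∈ faces E (cotype i),
      ((V i).filter (fun v => combineF i v w ∈ E)).card = δ i) :
    ∀ W : Fin (d + 1) → Finset α, (∀ i, W i ⊆ V i) →
      |((E.filter fun e => ∀ i, e i ∈ W i).card : ℝ) / (E.card : ℝ) -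
          ∏ i, ((W i).card : ℝ) / ((V i).card : ℝ)| ≤
        (d : ℝ) * ⨆ i, lamTildeB V E D δ i := by
  intro W hW
  have hM (i : Fin (d + 1)) : lamTildeB V E D δ i ≤ ⨆ i, lamTildeB V E D δ i :=
    le_ciSup (Set.finite_range _).bddAbove i
  have hE : (0 : ℝ) < #E := by exact_mod_cast hEne.card_pos
  have hmix := abs_card_filter_forall_sub_le hEV hdegV hdegW hW hM univ_nonempty
  simp only [mem_univ, forall_const, card_univ, Fintype.card_fin] at hmix
  rw [div_sub' hE.ne', abs_div, abs_of_pos hE, div_le_iff₀ hE]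
  push_cast at hmix
  linarith

/-- **Hypergraph mixing lemma.** Let `d ≥ 1` and let `H = (V 0, …, V d, E)` be a type-regular
`(d+1)`-partite hypergraph in which every vertex belongs to at least one edge. For each `i`,
let `B_i` be the `i`-induced bipartite graph of vertices versus walls, which is
`(D i, δ i)`-biregular by type-regularity. Then
`Disc(H) ≤ d · max_i λ̃(B_i)`, i.e. for all subsets `W i ⊆ V i`,
`| |E(W_0,…,W_d)|/|E| − ∏ |W i|/|V i| | ≤ d · max_i λ̃(B_i)`. -/
theorem hypergraph_mixing_lemma {α : Type*} [DecidableEq α] (d : ℕ) (hd : 1 ≤ d)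
    (V : Fin (d + 1) → Finset α) (E : Finset (Fin (d + 1) → α))
    (hVne : ∀ i, (V i).Nonempty)
    (hVdisj : ∀ i j, i ≠ j → Disjoint (V i) (V j))
    (hEne : E.Nonempty)
    (hEV : ∀ e ∈ E, ∀ i, e i ∈ V i)
    -- every vertex belongs to at least one edge
    (hcover : ∀ i, ∀ v ∈ V i, ∃ e ∈ E, e i = v)
    -- type-regularity : every `I`-face extends to the same number of `J`-faces
    (hreg : ∀ I J : Finset (Fin (d + 1)), ∀ hIJ : I ⊆ J, ∃ k : ℕ,
      ∀ f ∈ faces E I,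
        ((faces E J).filter
          (fun g => ∀ j : {j : Fin (d + 1) // j ∈ I}, g ⟨j.1, hIJ j.2⟩ = f j)).card = k)
    -- the bidegrees of the `i`-induced bipartite graphs (deduced from type-regularity)
    (D δ : Fin (d + 1) → ℕ)
    (hD1 : ∀ i, 1 ≤ D i) (hδ1 : ∀ i, 1 ≤ δ i)
    (hdegV : ∀ i, ∀ v ∈ V i,
      ((faces E (cotype i)).filter (fun w => combineF i v w ∈ E)).card = D i)
    (hdegW : ∀ i, ∀ w ∈ faces E (cotype i),
      ((V i).filter (fun v => combineF i v w ∈ E)).card = δ i) :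
    ∀ W : Fin (d + 1) → Finset α, (∀ i, W i ⊆ V i) →
      |((E.filter fun e => ∀ i, e i ∈ W i).card : ℝ) / (E.card : ℝ) -
          ∏ i, ((W i).card : ℝ) / ((V i).card : ℝ)| ≤
        (d : ℝ) * ⨆ i, lamTildeB V E D δ i :=
  hypergraph_mixing_lemma_general d V E hEne hEV D δ hdegV hdegW
end
end

section
/- Let n ≥ 1, let 0 ≤ p ≤ 1 be a real number, and let X_1, …, X_n be random variables on a finite probability space, each taking values in {0, 1, 2}. Suppose that for each i = 1, …, n and each tuple (a_1, …, a_{i−1}) ∈ {0,1,2}^{i−1} with P(X_1 = a_1, …, X_{i−1} = a_{i−1}) > 0, the conditional probabilities satisfy P(X_i = 1 | X_1 = a_1, …, X_{i−1} = a_{i−1}) ≤ p and P(X_i = 2 | X_1 = a_1, …, X_{i−1} = a_{i−1}) ≤ p². Then for every integer m with 0 ≤ m ≤ 2n, P(X_1 + X_2 + ⋯ + X_n = m) ≤ 3^n · p^m. -/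
/-! Fix a tuple `a ∈ {0,1,2}ⁿ`. Conditioning coordinate by coordinate, the chain rule bounds the
probability that `X = a` by `∏ p ^ aᵢ = p ^ ∑ aᵢ`. The event `∑ Xᵢ = m` is the disjoint union of
the events `X = a` over the at most `3ⁿ` tuples with `∑ aᵢ = m`. -/

open Finset

section Cylinder

variable {Ω α : Type*} [Fintype Ω] [DecidableEq α] {n : ℕ}

def cylinder (X : Fin n → Ω → α) (a : Fin n → α) (k : ℕ) : Finset Ω :=
  univ.filter fun ω => ∀ j : Fin n, (j : ℕ) < k → X j ω = a j

variable (X : Fin n → Ω → α) (a : Fin n → α)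

@[simp]
lemma cylinder_zero : cylinder X a 0 = univ :=
  filter_true_of_mem fun _ _ _ hj => absurd hj (Nat.not_lt_zero _)

lemma cylinder_val (i : Fin n) :
    cylinder X a i = univ.filter fun ω => ∀ j < i, X j ω = a j :=
  filter_congr fun _ _ => Iff.rfl

lemma cylinder_val_succ (i : Fin n) :
    cylinder X a (i + 1) = univ.filter fun ω => X i ω = a i ∧ ∀ j < i, X j ω = a j := by
  refine filter_congr fun ω _ => ?_
  simp only [Nat.lt_succ_iff_lt_or_eq, or_imp, forall_and, Fin.val_inj, forall_eq, and_comm]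
  rfl

lemma filter_val_lt_succ (i : Fin n) :
    (univ.filter fun j : Fin n => (j : ℕ) < i + 1) =
      insert i (univ.filter fun j : Fin n => (j : ℕ) < i) := by
  ext j
  simp only [mem_filter, mem_univ, true_and, mem_insert, Fin.ext_iff]
  omega

lemma sum_cylinder_le_prod (μ : Ω → ℝ) (hμ1 : ∑ ω, μ ω ≤ 1) (r : Fin n → ℝ) (hr : ∀ i, 0 ≤ r i)
    (hstep : ∀ i : Fin n,
      ∑ ω ∈ univ.filter (fun ω => X i ω = a i ∧ ∀ j < i, X j ω = a j), μ ω ≤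
        r i * ∑ ω ∈ univ.filter (fun ω => ∀ j < i, X j ω = a j), μ ω) :
    ∀ k ≤ n, ∑ ω ∈ cylinder X a k, μ ω ≤ ∏ j ∈ univ.filter (fun j : Fin n => (j : ℕ) < k), r j
  | 0, _ => by simpa using hμ1
  | k + 1, hk => by
    let i : Fin n := ⟨k, hk⟩
    have ih := sum_cylinder_le_prod μ hμ1 r hr hstep k (Nat.le_of_succ_le hk)
    calc ∑ ω ∈ cylinder X a (i + 1), μ ω
        ≤ r i * ∑ ω ∈ cylinder X a i, μ ω := by rw [cylinder_val_succ, cylinder_val]; exact hstep i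
      _ ≤ r i * ∏ j ∈ univ.filter (fun j : Fin n => (j : ℕ) < i), r j :=
        mul_le_mul_of_nonneg_left ih (hr i)
      _ = ∏ j ∈ univ.filter (fun j : Fin n => (j : ℕ) < i + 1), r j := by
        rw [filter_val_lt_succ, prod_insert (by simp)]

end Cylinder

section Mass

variable {Ω : Type*} {μ : Ω → ℝ}

lemma sum_le_mul_of_div_le (hμ0 : ∀ ω, 0 ≤ μ ω) {A B : Finset Ω} (hAB : A ⊆ B) {q : ℝ}
    (hq : 0 < ∑ ω ∈ B, μ ω → (∑ ω ∈ A, μ ω) / ∑ ω ∈ B, μ ω ≤ q) :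
    ∑ ω ∈ A, μ ω ≤ q * ∑ ω ∈ B, μ ω := by
  have hA : ∑ ω ∈ A, μ ω ≤ ∑ ω ∈ B, μ ω := sum_le_sum_of_subset_of_nonneg hAB fun ω _ _ => hμ0 ω
  rcases (sum_nonneg fun ω _ => hμ0 ω : 0 ≤ ∑ ω ∈ B, μ ω).eq_or_lt with hB | hB
  · rw [← hB] at hA ⊢
    simpa using hA
  · exact (div_le_iff₀ hB).mp (hq hB)

lemma sum_le_card_mul_of_sum_fiber_le {β : Type*} [DecidableEq β] {s : Finset Ω} {t : Finset β}
    {g : Ω → β} (hg : ∀ ω ∈ s, g ω ∈ t) {C : ℝ}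
    (hC : ∀ b ∈ t, ∑ ω ∈ s.filter (fun ω => g ω = b), μ ω ≤ C) :
    ∑ ω ∈ s, μ ω ≤ #t * C := by
  rw [← sum_fiberwise_of_maps_to hg, ← nsmul_eq_mul]
  exact sum_le_card_nsmul t _ C hC

lemma sum_filter_sum_eq_le [Fintype Ω] (hμ0 : ∀ ω, 0 ≤ μ ω) {n k : ℕ} {X : Fin n → Ω → ℕ}
    (hX : ∀ i ω, X i ω < k) {f : ℕ → ℝ}
    (hf : ∀ a ∈ Fintype.piFinset fun _ => range k, ∑ ω ∈ cylinder X a n, μ ω ≤ f (∑ j, a j))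
    {m : ℕ} (hfm : 0 ≤ f m) :
    ∑ ω ∈ univ.filter (fun ω => ∑ i, X i ω = m), μ ω ≤ k ^ n * f m := by
  set values := Fintype.piFinset fun _ : Fin n => range k
  have hvalues : ∀ ω ∈ univ.filter (fun ω => ∑ i, X i ω = m),
      (fun i => X i ω) ∈ values.filter (fun a => ∑ j, a j = m) := by
    intro ω hω
    simpa [values, hX _ ω] using hω
  have hfiber : ∀ a ∈ values.filter (fun a => ∑ j, a j = m),
      ∑ ω ∈ (univ.filter fun ω => ∑ i, X i ω = m).filter (fun ω => (fun i => X i ω) = a), μ ω ≤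
        f m := by
    intro a ha
    rw [mem_filter] at ha
    refine (sum_le_sum_of_subset_of_nonneg (fun ω hω => ?_) fun ω _ _ => hμ0 ω).trans
      (ha.2 ▸ hf a ha.1)
    simpa [cylinder, funext_iff] using (mem_filter.mp hω).2
  calc ∑ ω ∈ univ.filter (fun ω => ∑ i, X i ω = m), μ ω
      ≤ #(values.filter fun a => ∑ j, a j = m) * f m :=
        sum_le_card_mul_of_sum_fiber_le hvalues hfiber
    _ ≤ #values * f m := by gcongr; exact filter_subset _ _
    _ = k ^ n * f m := by simp [values]

end Mass

theorem prob_sum_eq_le_general {Ω : Type*} [Fintype Ω]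
    (μ : Ω → ℝ) (hμ0 : ∀ ω, 0 ≤ μ ω) (hμ1 : ∑ ω, μ ω = 1)
    (n : ℕ) (p : ℝ) (hp0 : 0 ≤ p)
    (X : Fin n → Ω → ℕ) (hX : ∀ i ω, X i ω ≤ 2)
    (hcond : ∀ (i : Fin n) (a : Fin n → ℕ),
      0 < ∑ ω ∈ Finset.univ.filter (fun ω => ∀ j : Fin n, j < i → X j ω = a j), μ ω →
      ((∑ ω ∈ Finset.univ.filter
            (fun ω => X i ω = 1 ∧ ∀ j : Fin n, j < i → X j ω = a j), μ ω) /
          (∑ ω ∈ Finset.univ.filter (fun ω => ∀ j : Fin n, j < i → X j ω = a j), μ ω) ≤ p ∧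
        (∑ ω ∈ Finset.univ.filter
            (fun ω => X i ω = 2 ∧ ∀ j : Fin n, j < i → X j ω = a j), μ ω) /
          (∑ ω ∈ Finset.univ.filter (fun ω => ∀ j : Fin n, j < i → X j ω = a j), μ ω) ≤ p ^ 2)) :
    ∀ m : ℕ, m ≤ 2 * n →
      (∑ ω ∈ Finset.univ.filter (fun ω => ∑ i, X i ω = m), μ ω) ≤ 3 ^ n * p ^ m := by
  intro m _
  refine (sum_filter_sum_eq_le hμ0 (k := 3) (fun i ω => Nat.lt_succ_of_le (hX i ω))
    (f := (p ^ ·)) (fun a ha => ?_) (pow_nonneg hp0 m)).trans_eq (by norm_num)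
  have hstep (i : Fin n) :
      ∑ ω ∈ univ.filter (fun ω => X i ω = a i ∧ ∀ j < i, X j ω = a j), μ ω ≤
        p ^ a i * ∑ ω ∈ univ.filter (fun ω => ∀ j < i, X j ω = a j), μ ω := by
    have hsub := monotone_filter_right univ fun ω _ (h : X i ω = a i ∧ ∀ j < i, X j ω = a j) => h.2
    refine sum_le_mul_of_div_le hμ0 hsub fun hD => ?_
    have hai : a i < 3 := mem_range.mp (Fintype.mem_piFinset.mp ha i)
    interval_cases h : a i
    · rw [pow_zero]
      exact div_le_one_of_le₀ (sum_le_sum_of_subset_of_nonneg hsub fun ω _ _ => hμ0 ω) hD.le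
    · simpa [h] using (hcond i a hD).1
    · simpa [h] using (hcond i a hD).2
  simpa [prod_pow_eq_pow_sum] using
    sum_cylinder_le_prod X a μ hμ1.le _ (fun i => pow_nonneg hp0 _) hstep n le_rfl

/-- Let `n ≥ 1`, let `0 ≤ p ≤ 1`, and let `X 1, …, X n` be random variables on a finite
probability space `(Ω, μ)`, each taking values in `{0, 1, 2}`. Suppose that, conditioned on
any values of the previous variables (with positive probability), `X i = 1` has conditional
probability at most `p` and `X i = 2` has conditional probability at most `p²`. Then for
every `m ≤ 2n`, the probability that `X 1 + ⋯ + X n = m` is at most `3^n · p^m`. -/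
theorem prob_sum_eq_le {Ω : Type*} [Fintype Ω] [DecidableEq Ω]
    (μ : Ω → ℝ) (hμ0 : ∀ ω, 0 ≤ μ ω) (hμ1 : ∑ ω, μ ω = 1)
    (n : ℕ) (hn : 1 ≤ n) (p : ℝ) (hp0 : 0 ≤ p) (hp1 : p ≤ 1)
    (X : Fin n → Ω → ℕ) (hX : ∀ i ω, X i ω ≤ 2)
    (hcond : ∀ (i : Fin n) (a : Fin n → ℕ),
      0 < ∑ ω ∈ Finset.univ.filter (fun ω => ∀ j : Fin n, j < i → X j ω = a j), μ ω →
      ((∑ ω ∈ Finset.univ.filter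
            (fun ω => X i ω = 1 ∧ ∀ j : Fin n, j < i → X j ω = a j), μ ω) /
          (∑ ω ∈ Finset.univ.filter (fun ω => ∀ j : Fin n, j < i → X j ω = a j), μ ω) ≤ p ∧
        (∑ ω ∈ Finset.univ.filter
            (fun ω => X i ω = 2 ∧ ∀ j : Fin n, j < i → X j ω = a j), μ ω) /
          (∑ ω ∈ Finset.univ.filter (fun ω => ∀ j : Fin n, j < i → X j ω = a j), μ ω) ≤ p ^ 2)) :
    ∀ m : ℕ, m ≤ 2 * n →
      (∑ ω ∈ Finset.univ.filter (fun ω => ∑ i, X i ω = m), μ ω) ≤ 3 ^ n * p ^ m :=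
  prob_sum_eq_le_general μ hμ0 hμ1 n p hp0 X hX hcond
end
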